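/- arXiv:2502.01328 — 4 statements merged into one kernel-verified Lean document; each statement's English description precedes it below -/
import Mathlib

section
/- If (a_1,...,a_n) is an n-tuple of integers with M_n(a_1,...,a_n) = ε·Id for ε ∈ {1,-1}, then the reversed tuple satisfies M_n(a_n,...,a_1) = ε·Id. -/
open Matrix

def E (a : ℤ) : Matrix (Fin 2) (Fin 2) ℤ := !![a, -1; 1, 0]

/-- `M [a₁, …, aₙ] = E aₙ * ⋯ * E a₁`. -/
def M (l : List ℤ) : Matrix (Fin 2) (Fin 2) ℤ :=
  (l.map E).foldl (fun acc x => x * acc) 1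

def S : Matrix (Fin 2) (Fin 2) ℤ := !![0, -1; 1, 0]

def T : Matrix (Fin 2) (Fin 2) ℤ := !![1, 1; 0, 1]

def D : Matrix (Fin 2) (Fin 2) ℤ := !![1, 0; 0, -1]

lemma foldl_mul (l : List ℤ) (init : Matrix (Fin 2) (Fin 2) ℤ) :
    (l.map E).foldl (fun acc x => x * acc) init = M l * init := by
  induction l generalizing init with
  | nil => simp [M]
  | cons a t ih =>
      simp only [List.map_cons, List.foldl_cons, M]
      rw [ih, ih (E a * 1)]
      simp [mul_assoc]

lemma M_cons (a : ℤ) (t : List ℤ) : M (a :: t) = M t * E a := by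
  simp only [M, List.map_cons, List.foldl_cons]
  rw [foldl_mul]
  simp [M]

lemma M_append (l₁ l₂ : List ℤ) : M (l₁ ++ l₂) = M l₂ * M l₁ := by
  induction l₁ with
  | nil => simp [M]
  | cons a t ih =>
      rw [List.cons_append, M_cons, M_cons, ih, mul_assoc]

lemma DD : D * D = 1 := by
  ext i j
  fin_cases i <;> fin_cases j <;>
    simp [D, Matrix.mul_apply, Fin.sum_univ_two, Matrix.one_apply]

lemma DED (a : ℤ) : D * (E a)ᵀ * D = E a := by
  have ht : (E a)ᵀ = !![a, 1; -1, 0] := by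
    ext i j; fin_cases i <;> fin_cases j <;> rfl
  rw [ht]
  ext i j
  fin_cases i <;> fin_cases j <;>
    simp [D, E, Matrix.mul_apply, Fin.sum_univ_two]

lemma M_rev (l : List ℤ) : M l.reverse = D * (M l)ᵀ * D := by
  induction l with
  | nil => simp [M, DD]
  | cons a t ih =>
      rw [List.reverse_cons, M_append, M_cons, ih]
      have hnil : M ([] : List ℤ) = 1 := rfl
      rw [hnil, one_mul, M_cons, Matrix.transpose_mul]
      calc E a * (D * (M t)ᵀ * D)
          = (D * (E a)ᵀ * D) * (D * (M t)ᵀ * D) := by rw [DED]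
        _ = D * ((E a)ᵀ * (M t)ᵀ) * D := by
            simp only [Matrix.mul_assoc]
            rw [← Matrix.mul_assoc D D ((M t)ᵀ * D), DD, one_mul]

theorem stmt5 (l : List ℤ) (ε : ℤ) (hε : ε = 1 ∨ ε = -1)
    (h : M l = ε • (1 : Matrix (Fin 2) (Fin 2) ℤ)) :
    M l.reverse = ε • (1 : Matrix (Fin 2) (Fin 2) ℤ) := by
  rw [M_rev, h]
  rw [Matrix.transpose_smul, Matrix.transpose_one]
  rw [Matrix.mul_smul, Matrix.smul_mul, Matrix.mul_one, DD]
end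

section
/- The only quadruples of positive integers (a_1,a_2,a_3,a_4) with M_4(a_1,a_2,a_3,a_4) = ±Id are (1,2,1,2) and (2,1,2,1). -/
open Matrix

lemma M4 (a₁ a₂ a₃ a₄ : ℤ) : M [a₁, a₂, a₃, a₄] =
    !![a₁*a₂*a₃*a₄ - a₃*a₄ - a₁*a₂ - a₁*a₄ + 1, -a₂*a₃*a₄ + a₂ + a₄;
       a₁*a₂*a₃ - a₃ - a₁, 1 - a₂*a₃] := by
  simp only [M, List.map, List.foldl, E, mul_one, Matrix.mul_fin_two]
  ring_nf

theorem stmt8 (a₁ a₂ a₃ a₄ : ℤ) (h₁ : 0 < a₁) (h₂ : 0 < a₂) (h₃ : 0 < a₃) (h₄ : 0 < a₄) :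
    (M [a₁, a₂, a₃, a₄] = 1 ∨ M [a₁, a₂, a₃, a₄] = -1) ↔
      ((a₁ = 1 ∧ a₂ = 2 ∧ a₃ = 1 ∧ a₄ = 2) ∨ (a₁ = 2 ∧ a₂ = 1 ∧ a₃ = 2 ∧ a₄ = 1)) := by
  rw [M4]
  have hm1 : -(!![1,0;0,1] : Matrix (Fin 2) (Fin 2) ℤ) = !![-1,0;0,-1] := by
    ext i j; fin_cases i <;> fin_cases j <;> simp
  rw [Matrix.one_fin_two, hm1]
  constructor
  · rintro (h | h) <;> rw [← Matrix.ext_iff] at h <;>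
      have e00 := h 0 0 <;> have e01 := h 0 1 <;> have e10 := h 1 0 <;> have e11 := h 1 1 <;>
      simp at e00 e01 e10 e11
    · exfalso; nlinarith
    · -- a₂ * a₃ = 2
      have h23 : a₂ * a₃ = 2 := by linarith
      have : (a₂ = 1 ∧ a₃ = 2) ∨ (a₂ = 2 ∧ a₃ = 1) := by
        have hb : a₂ ≤ 2 := by nlinarith
        interval_cases a₂ <;> omega
      rcases this with ⟨rfl, rfl⟩ | ⟨rfl, rfl⟩
      · right; refine ⟨by nlinarith, rfl, by nlinarith, by nlinarith⟩
      · left; refine ⟨by nlinarith, rfl, by nlinarith, by nlinarith⟩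
  · rintro (⟨rfl, rfl, rfl, rfl⟩ | ⟨rfl, rfl, rfl, rfl⟩) <;> right <;> norm_num
end

section
/- Let n ≥ 1, (a_1,...,a_{n+2}) positive integers, and ε ∈ {1,-1}. Then M_{n+2}(a_1,...,a_{n+2}) = ε·S·T if and only if M_{n+2}(a_1+1, a_2,...,a_{n+1}, a_{n+2}+1) = ε·Id, where S = [[0,-1],[1,0]] and T = [[1,1],[0,1]]. -/
open Matrix

lemma foldl_eq (l : List ℤ) : ∀ init, (l.map E).foldl (fun acc x => x * acc) init = M l * init := by
  induction l with
  | nil => intro init; simp [M]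
  | cons a l ih =>
    intro init
    rw [List.map_cons, List.foldl_cons, ih]
    have h2 : M (a :: l) = M l * E a := by
      show ((a :: l).map E).foldl (fun acc x => x * acc) 1 = _
      rw [List.map_cons, List.foldl_cons, ih, mul_one]
    rw [h2, mul_assoc]

lemma M_single (a : ℤ) : M [a] = E a := by simp [M]

lemma M_split (a b : ℤ) (m : List ℤ) : M (a :: m ++ [b]) = E b * M m * E a := by
  have : (a :: m ++ [b]) = [a] ++ (m ++ [b]) := by simp
  rw [this, M_append, M_append, M_single, M_single]

lemma E_succ_left (a : ℤ) : E (a + 1) = T * E a := by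
  ext i j; fin_cases i <;> fin_cases j <;> simp [E, T, Matrix.mul_apply, Fin.sum_univ_two]

lemma E_succ_right (a : ℤ) : E (a + 1) = E a * !![1, 0; -1, 1] := by
  ext i j; fin_cases i <;> fin_cases j <;> simp [E, Matrix.mul_apply, Fin.sum_univ_two]

theorem stmt13 (n : ℕ) (hn : 1 ≤ n) (x y : ℤ) (m : List ℤ) (hm : m.length = n)
    (hx : 0 < x) (hy : 0 < y) (hpos : ∀ a ∈ m, 0 < a)
    (ε : ℤ) (hε : ε = 1 ∨ ε = -1) :
    M (x :: m ++ [y]) = ε • (S * T) ↔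
      M ((x + 1) :: m ++ [y + 1]) = ε • (1 : Matrix (Fin 2) (Fin 2) ℤ) := by
  rw [M_split, M_split, E_succ_left y, E_succ_right x]
  set U : Matrix (Fin 2) (Fin 2) ℤ := !![1, 0; -1, 1] with hU
  set A : Matrix (Fin 2) (Fin 2) ℤ := E y * M m * E x with hA
  have key : T * E y * M m * (E x * U) = T * A * U := by
    simp [hA, mul_assoc]
  rw [key]
  constructor
  · intro h
    rw [h]
    rw [Matrix.mul_smul, Matrix.smul_mul]
    congr 1
    show T * (S * T) * U = 1
    simp [T, S, hU]
    ext i j; fin_cases i <;> fin_cases j <;> simp [Matrix.mul_apply, Fin.sum_univ_two]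
  · intro h
    have h2 := congrArg (fun X => !![(1:ℤ), -1; 0, 1] * X * !![1, 0; 1, 1]) h
    have hT : !![(1:ℤ), -1; 0, 1] * T = 1 := by
      ext i j; fin_cases i <;> fin_cases j <;> simp [T, Matrix.mul_apply, Fin.sum_univ_two]
    have hU1 : U * !![(1:ℤ), 0; 1, 1] = 1 := by
      ext i j; fin_cases i <;> fin_cases j <;> simp [hU, Matrix.mul_apply, Fin.sum_univ_two]
    have hST : !![(1:ℤ), -1; 0, 1] * 1 * !![1, 0; 1, 1] = S * T := by
      ext i j; fin_cases i <;> fin_cases j <;> simp [S, T, Matrix.mul_apply, Fin.sum_univ_two]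
    calc A = (!![(1:ℤ), -1; 0, 1] * T) * A * (U * !![1, 0; 1, 1]) := by rw [hT, hU1]; simp
    _ = !![(1:ℤ), -1; 0, 1] * (T * A * U) * !![1, 0; 1, 1] := by noncomm_ring
    _ = ε • (S * T) := by
        rw [h, Matrix.mul_smul, Matrix.smul_mul, hST]
end

section
/- Let n ≥ 1, (a_1,...,a_{n+2}) positive integers, and ε ∈ {1,-1}. Then M_{n+2}(a_1,...,a_{n+2}) = ε·(TS)^2 if and only if M_{n+3}(a_1,...,a_{n+2},1) = -ε·Id, where S = [[0,-1],[1,0]] and T = [[1,1],[0,1]]. -/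
open Matrix

lemma M_append_one (l : List ℤ) : M (l ++ [1]) = E 1 * M l := by
  simp [M, List.foldl_append]

lemma key1 : E 1 * (T * S) ^ 2 = -1 := by
  simp only [E, T, S, pow_two]
  norm_num [Matrix.mul_fin_two]
  decide

lemma key2 : !![(0:ℤ), 1; -1, 1] * E 1 = 1 := by
  simp only [E]
  norm_num [Matrix.mul_fin_two]
  decide

lemma key3 : (T * S) ^ 2 = -(!![(0:ℤ), 1; -1, 1]) := by
  simp only [T, S, pow_two]
  norm_num [Matrix.mul_fin_two]


theorem stmt14 (n : ℕ) (hn : 1 ≤ n) (l : List ℤ) (hl : l.length = n + 2)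
    (hpos : ∀ a ∈ l, 0 < a) (ε : ℤ) (hε : ε = 1 ∨ ε = -1) :
    M l = ε • (T * S) ^ 2 ↔
      M (l ++ [1]) = (-ε) • (1 : Matrix (Fin 2) (Fin 2) ℤ) := by
  rw [M_append_one]
  constructor
  · intro h
    rw [h, Matrix.mul_smul, key1, neg_smul, smul_neg]
  · intro h
    have := congrArg (fun X => !![(0:ℤ), 1; -1, 1] * X) h
    simp only [← mul_assoc, key2, one_mul, Matrix.mul_smul, mul_one] at this
    rw [this, key3, neg_smul, smul_neg]
end
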